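/- Let A, B be binary strings of length n with 1(A) = 0(B) = α, and n > 2α. Partition A = L_A ++ M_A ++ R_A and B = L_B ++ M_B ++ R_B with |L_A| = |R_A| = |L_B| = |R_B| = α. If 1(R_B) > α/2 + β and 0(L_A) > α/2 + β for some β > 0, then LCS(A,B) ≥ min(0(L_A), 0(L_B ++ M_B)) + min(1(M_A ++ R_A), 1(R_B)) > α + 2β. -/

import Mathlib

/-! A common subsequence of the shape `0^k 1^m` is found by taking the zeros from the first block
of one split of each string and the ones from the second block. Since `A` has exactly `α` ones and
`|L_A| = α`, the ones of `M_A ++ R_A` are as many as the zeros of `L_A`; dually for `B`. So both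
minima equal `min 0(L_A) 1(R_B) > α/2 + β`. -/

/-- Length of the longest common subsequence of two binary strings. -/
def lcsLen (A B : List Bool) : ℕ :=
  ((A.sublists.filter (fun c => decide (c.Sublist B))).map List.length).foldr max 0

theorem List.Sublist.length_le_lcsLen {c A B : List Bool} (hA : c.Sublist A) (hB : c.Sublist B) :
    c.length ≤ lcsLen A B :=
  List.le_max_of_le' 0
    (List.mem_map_of_mem (List.mem_filter.mpr ⟨List.mem_sublists.mpr hA, decide_eq_true hB⟩))
    le_rfl

theorem min_count_add_min_count_le_lcsLen (X Y Z W : List Bool) (a b : Bool) :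
    min (X.count a) (Z.count a) + min (Y.count b) (W.count b) ≤ lcsLen (X ++ Y) (Z ++ W) := by
  set k := min (X.count a) (Z.count a)
  set m := min (Y.count b) (W.count b)
  have hc : ∀ {P Q : List Bool}, k ≤ P.count a → m ≤ Q.count b →
      (List.replicate k a ++ List.replicate m b).Sublist (P ++ Q) := fun hk hm =>
    (List.replicate_sublist_iff.mpr hk).append (List.replicate_sublist_iff.mpr hm)
  simpa using List.Sublist.length_le_lcsLen (hc (min_le_left _ _) (min_le_left _ _))
    (hc (min_le_right _ _) (min_le_right _ _))

theorem List.count_eq_count_not_of_count_append_eq_length_right {X Y : List Bool} {b : Bool}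
    (h : (X ++ Y).count b = Y.length) : X.count b = Y.count (!b) := by
  have := Y.count_add_count_not b
  rw [List.count_append] at h
  omega

theorem List.count_eq_count_not_of_count_append_eq_length_left {X Y : List Bool} {b : Bool}
    (h : (X ++ Y).count b = X.length) : Y.count b = X.count (!b) := by
  have := X.count_add_count_not b
  rw [List.count_append] at h
  omega

theorem case_5_general (A B LA MA RA LB MB RB : List Bool) (α : ℕ) (β : ℝ)
    (h1A : A.count true = α) (h0B : B.count false = α)
    (hA : A = LA ++ MA ++ RA) (hB : B = LB ++ MB ++ RB)
    (hLA : LA.length = α) (hRB : RB.length = α)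
    (h1RB : (RB.count true : ℝ) > (α : ℝ) / 2 + β)
    (h0LA : (LA.count false : ℝ) > (α : ℝ) / 2 + β) :
    (lcsLen A B : ℝ) ≥
      (min (LA.count false) ((LB ++ MB).count false) : ℝ) +
      (min ((MA ++ RA).count true) (RB.count true) : ℝ) ∧
    (min (LA.count false) ((LB ++ MB).count false) : ℝ) +
      (min ((MA ++ RA).count true) (RB.count true) : ℝ) > (α : ℝ) + 2 * β := by
  rw [List.append_assoc] at hA
  subst hA hB
  have hzeros : (LB ++ MB).count false = RB.count true :=
    List.count_eq_count_not_of_count_append_eq_length_right (h0B.trans hRB.symm)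
  have hones : (MA ++ RA).count true = LA.count false :=
    List.count_eq_count_not_of_count_append_eq_length_left (h1A.trans hLA.symm)
  refine ⟨?_, ?_⟩
  · exact_mod_cast min_count_add_min_count_le_lcsLen LA (MA ++ RA) (LB ++ MB) RB false true
  · rw [hzeros, hones]
    linarith [lt_min h0LA h1RB]

theorem case_5 (A B LA MA RA LB MB RB : List Bool) (n α : ℕ) (β : ℝ) (hβ : 0 < β)
    (hAn : A.length = n) (hBn : B.length = n) (hn : n > 2 * α)
    (h1A : A.count true = α) (h0B : B.count false = α)
    (hA : A = LA ++ MA ++ RA) (hB : B = LB ++ MB ++ RB)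
    (hLA : LA.length = α) (hRA : RA.length = α) (hLB : LB.length = α) (hRB : RB.length = α)
    (h1RB : (RB.count true : ℝ) > (α : ℝ) / 2 + β)
    (h0LA : (LA.count false : ℝ) > (α : ℝ) / 2 + β) :
    (lcsLen A B : ℝ) ≥
      (min (LA.count false) ((LB ++ MB).count false) : ℝ) +
      (min ((MA ++ RA).count true) (RB.count true) : ℝ) ∧
    (min (LA.count false) ((LB ++ MB).count false) : ℝ) +
      (min ((MA ++ RA).count true) (RB.count true) : ℝ) > (α : ℝ) + 2 * β :=
  case_5_general A B LA MA RA LB MB RB α β h1A h0B hA hB hLA hRB h1RB h0LA
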